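/- For every u ∈ ℂ the following identity holds in Cl ⊗ Cl: ( Σ_{k=0}^{r} ((−1)^k/(2k)!)·a_k(u)·a_{r−k}(u)·I_{2k} )·P_r^S = ( Π_{k=0}^{r−1}(u+k) )·P_r^S, where a_k(u) := Π_{j=0}^{k−1}(u/2 + j) is the ascending factorial (so a_k(u) = Γ(u/2+k)/Γ(u/2)) and P_r^S := (p_{+1,+1} + p_{−1,−1})·P_r. -/

import Mathlib

open scoped TensorProduct

noncomputable section

/-- The quadratic form `x₁² + ⋯ + x_{2r}²` on `ℂ^{2r}`. -/
def Qf (r : ℕ) : QuadraticForm ℂ (Fin (2*r) → ℂ) :=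
  QuadraticMap.weightedSumSquares ℂ (fun _ : Fin (2*r) => (1:ℂ))

/-- The Clifford algebra of `Qf r`. -/
abbrev Cl (r : ℕ) := CliffordAlgebra (Qf r)

/-- The generators `Γ_i`. -/
def Γgen (r : ℕ) (i : Fin (2*r)) : Cl r :=
  CliffordAlgebra.ι (Qf r) (Pi.single i 1)

/-- The antisymmetrised products `Γ_{[i₁…i_k]}`. -/
def Γbr (r k : ℕ) (i : Fin k → Fin (2*r)) : Cl r :=
  ((k.factorial : ℂ))⁻¹ •
    ∑ σ : Equiv.Perm (Fin k),
      ((Equiv.Perm.sign σ : ℤ) : ℂ) • (List.ofFn fun j => Γgen r (i (σ j))).prod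

/-- The invariants `I_k ∈ Cl ⊗ Cl`. -/
def Ik (r k : ℕ) : Cl r ⊗[ℂ] Cl r :=
  ∑ i : Fin k → Fin (2*r), (Γbr r k i) ⊗ₜ[ℂ] (Γbr r k i)

/-- The split Casimir element `Ĉ = −I₂/(16(2r−2))`. -/
def sC (r : ℕ) : Cl r ⊗[ℂ] Cl r := (-(16*(2*(r:ℂ)-2))⁻¹) • Ik r 2

/-- The top element `Γ_{2r+1} = (−i)^r Γ₁⋯Γ_{2r}`. -/
def Γtop (r : ℕ) : Cl r :=
  ((-Complex.I)^r) • (List.ofFn fun i : Fin (2*r) => Γgen r i).prod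

/-- The chirality projector `p_ε = (1 + ε Γ_{2r+1})/2`. -/
def pCh (r : ℕ) (ε : ℂ) : Cl r := (2:ℂ)⁻¹ • (1 + ε • Γtop r)

/-- The chirality projectors `p_{εε'} = p_ε ⊗ p_{ε'}`. -/
def ppCh (r : ℕ) (ε ε' : ℂ) : Cl r ⊗[ℂ] Cl r := (pCh r ε) ⊗ₜ[ℂ] (pCh r ε')

/-- The eigenvalues `c_k = (2k(2r−k) − r(2r−1))/(16(r−1))`. -/
def cEv (r k : ℕ) : ℂ :=
  (2*(k:ℂ)*(2*(r:ℂ)-(k:ℂ)) - (r:ℂ)*(2*(r:ℂ)-1)) / (16*((r:ℂ)-1))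

/-- The spectral projectors `P_k = Π_{j≠k} (Ĉ − c_j)/(c_k − c_j)`. -/
def Pk (r k : ℕ) : Cl r ⊗[ℂ] Cl r :=
  (((List.range (r+1)).filter (fun j => j ≠ k)).map
    (fun j => (cEv r k - cEv r j)⁻¹ • (sC r - cEv r j • 1))).prod

/-- `P_r^S = (p_{++} + p_{−−})·P_r`. -/
def PrS (r : ℕ) : Cl r ⊗[ℂ] Cl r := (ppCh r 1 1 + ppCh r (-1) (-1)) * Pk r r

/-- The ascending factorial `a_k(u) = (u/2)(u/2+1)⋯(u/2+k−1)`. -/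
def asc (u : ℂ) (k : ℕ) : ℂ := ∏ j ∈ Finset.range k, (u/2 + (j:ℂ))

/-!
The elements `ξ_i = Γ_i ⊗ Γ_i` of `Cl ⊗ Cl` are pairwise commuting involutions, and
`I_m = m! e_m(ξ)` for the elementary symmetric functions `e_m`. In particular `I_2 = S² - 2r`
with `S = Σ ξ_i`, so `Ĉ` and hence `P_r` are polynomials in `S`. A sum of `n` commuting
involutions is annihilated by `∏_{p=0}^{n} (X - (n - 2p))`, which for `n = 2r` is
`X ∏_{j<r} (X² - (2r - 2j)²)`; hence `S P_r = 0`. Feeding this into the recursion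
`S e_{m+1} = (m + 2) e_{m+2} + (2r - m) e_m` gives `I_{2k} P_r = (2k)! (-1)^k C(r, k) P_r`.
The chirality factor of `P_r^S` commutes with every `ξ_i`, so the left-hand side is
`Σ_k C(r, k) a_k(u) a_{r-k}(u) P_r^S`, and Vandermonde's identity for rising factorials
finishes the proof.
-/

open Finset Polynomial

section Anticommuting
variable {R : Type*} [Ring R]

theorem List.prod_ofFn_comp_swap_castSucc_succ {n : ℕ} (f : Fin (n + 1) → R) (i : Fin n)
    (h : f i.castSucc * f i.succ = -(f i.succ * f i.castSucc)) :
    (List.ofFn (f ∘ Equiv.swap i.castSucc i.succ)).prod = -(List.ofFn f).prod := by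
  induction n with
  | zero => exact i.elim0
  | succ n ih =>
    cases i using Fin.cases with
    | zero =>
      have hfix (j : Fin n) : Equiv.swap (0 : Fin (n + 2)) 1 j.succ.succ = j.succ.succ :=
        Equiv.swap_apply_of_ne_of_ne (Fin.succ_ne_zero _) (by simp [Fin.ext_iff])
      simp only [Fin.castSucc_zero, Fin.succ_zero_eq_one] at h
      simp [List.ofFn_succ, ← mul_assoc, h, hfix]
    | succ j =>
      rw [← Fin.succ_castSucc] at h ⊢
      have hhead : Equiv.swap j.castSucc.succ j.succ.succ 0 = 0 :=
        Equiv.swap_apply_of_ne_of_ne (Fin.succ_ne_zero _).symm (Fin.succ_ne_zero _).symm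
      have htail : (f ∘ Equiv.swap j.castSucc.succ j.succ.succ) ∘ Fin.succ
          = (f ∘ Fin.succ) ∘ Equiv.swap j.castSucc j.succ := by
        ext k
        simp [(Fin.succ_injective _).swap_apply]
      rw [List.ofFn_succ, List.ofFn_succ (f := f), List.prod_cons, List.prod_cons,
        Function.comp_apply, hhead]
      change f 0 * (List.ofFn ((f ∘ _) ∘ Fin.succ)).prod = _
      rw [htail, ih (f ∘ Fin.succ) j h, mul_neg]
      rfl

theorem List.prod_ofFn_comp_perm_of_anticommute {n : ℕ} (σ : Equiv.Perm (Fin n))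
    (f : Fin n → R) (hf : _root_.Pairwise fun i j => f i * f j = -(f j * f i)) :
    (List.ofFn (f ∘ σ)).prod = (Equiv.Perm.sign σ : ℤ) • (List.ofFn f).prod := by
  rcases n with _ | n
  · simp [Subsingleton.elim σ 1]
  induction σ using Submonoid.induction_of_closure_eq_top_right
    (Equiv.Perm.mclosure_swap_castSucc_succ n) generalizing f with
  | one => simp
  | mul_right σ τ hτ ih =>
    obtain ⟨i, rfl⟩ := hτ
    have hne : i.castSucc ≠ i.succ := Fin.castSucc_lt_succ.ne
    dsimp only
    rw [Equiv.Perm.coe_mul, ← Function.comp_assoc,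
      List.prod_ofFn_comp_swap_castSucc_succ (f ∘ σ) i (hf (σ.injective.ne hne)), ih f hf,
      Equiv.Perm.sign_mul, Equiv.Perm.sign_swap hne]
    simp

theorem exists_units_mul_list_prod (a : R) (l : List R)
    (h : ∀ b ∈ l, ∃ ε : ℤˣ, a * b = ε • (b * a)) : ∃ ε : ℤˣ, a * l.prod = ε • (l.prod * a) := by
  induction l with
  | nil => exact ⟨1, by simp⟩
  | cons b l ih =>
    obtain ⟨ε, hε⟩ := h b List.mem_cons_self
    obtain ⟨δ, hδ⟩ := ih fun c hc => h c (List.mem_cons_of_mem b hc)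
    refine ⟨ε * δ, ?_⟩
    rw [List.prod_cons, ← mul_assoc, hε, smul_mul_assoc, mul_assoc, hδ, mul_smul_comm, mul_smul,
      mul_assoc]

end Anticommuting

namespace Algebra.TensorProduct

variable {R A B : Type*} [CommSemiring R]

theorem commute_tmul_self [Ring A] [Algebra R A] {a b : A}
    (h : ∃ ε : ℤˣ, a * b = ε • (b * a)) : Commute (a ⊗ₜ[R] a) (b ⊗ₜ[R] b) := by
  obtain ⟨ε, h⟩ := h
  rcases Int.units_eq_one_or ε with rfl | rfl
  · simp only [one_smul] at h
    simp [Commute, SemiconjBy, h]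
  · simp only [Units.neg_smul, one_smul] at h
    simp [Commute, SemiconjBy, h, TensorProduct.neg_tmul, TensorProduct.tmul_neg]

theorem list_prod_map_tmul [Semiring A] [Algebra R A] [Semiring B] [Algebra R B] {ι : Type*}
    (l : List ι) (f : ι → A) (g : ι → B) :
    (l.map f).prod ⊗ₜ[R] (l.map g).prod = (l.map fun i => f i ⊗ₜ[R] g i).prod := by
  induction l with
  | nil => simp [one_def]
  | cons i l ih => simp [← ih]

end Algebra.TensorProduct

theorem Equiv.Perm.sum_sign_smul_comp_eq_zero {ι α M : Type*} [Fintype ι] [DecidableEq ι]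
    [AddCommGroup M] (g : (ι → α) → M) {v : ι → α} (hv : ¬ Function.Injective v) :
    ∑ σ : Equiv.Perm ι, Equiv.Perm.sign σ • g (v ∘ σ) = 0 := by
  obtain ⟨a, b, hvab, hab⟩ := Function.not_injective_iff.mp hv
  have hswap : v ∘ Equiv.swap a b = v := by
    ext j
    rcases eq_or_ne j a with rfl | hja
    · simp [hvab]
    rcases eq_or_ne j b with rfl | hjb
    · simp [hvab]
    simp [Equiv.swap_apply_of_ne_of_ne hja hjb]
  refine Finset.sum_involution (fun σ _ => Equiv.swap a b * σ) (fun σ _ => ?_)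
    (fun σ _ _ h => ?_) (fun _ _ => Finset.mem_univ _) (fun σ _ => Equiv.swap_mul_self_mul a b σ)
  · rw [Equiv.Perm.sign_mul, Equiv.Perm.sign_swap hab, Equiv.Perm.coe_mul, ← Function.comp_assoc,
      hswap, neg_mul, one_mul, Units.neg_smul, add_neg_cancel]
  · rw [mul_eq_right, Equiv.swap_eq_one_iff] at h
    exact hab h

theorem Finset.card_filter_injective_image_eq {ι : Type*} [Fintype ι] [DecidableEq ι] {m : ℕ}
    {A : Finset ι} (hA : #A = m) :
    #{v : Fin m → ι | Function.Injective v ∧ univ.image v = A} = m.factorial := by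
  let e : Fin m ≃ A := (A.equivFin.trans (finCongr hA)).symm
  rw [show m.factorial = #(univ : Finset (Equiv.Perm (Fin m))) by simp [Fintype.card_perm]]
  symm
  refine card_bij (fun σ _ j => (e (σ j) : ι)) (fun σ _ => ?_) (fun σ _ τ _ h => ?_)
    (fun v hv => ?_)
  · simp only [mem_filter, mem_univ, true_and]
    refine ⟨fun x y hxy => σ.injective (e.injective (Subtype.coe_injective hxy)), ?_⟩
    ext x
    simp only [mem_image, mem_univ, true_and]
    refine ⟨fun ⟨j, hj⟩ => hj ▸ (e (σ j)).2, fun hx => ⟨σ.symm (e.symm ⟨x, hx⟩), by simp⟩⟩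
  · ext j
    exact congrArg Fin.val (e.injective (Subtype.coe_injective (congrFun h j)))
  · simp only [mem_filter, mem_univ, true_and] at hv
    obtain ⟨hinj, himg⟩ := hv
    have hmem (j : Fin m) : v j ∈ A := himg ▸ mem_image_of_mem v (mem_univ j)
    have hbij : Function.Bijective fun j => e.symm ⟨v j, hmem j⟩ :=
      Finite.injective_iff_bijective.mp fun x y hxy =>
        hinj (congrArg Subtype.val (e.symm.injective hxy))
    exact ⟨Equiv.ofBijective _ hbij, mem_univ _, by ext j; simp⟩

theorem Finset.sum_filter_injective_image {ι M : Type*} [Fintype ι] [DecidableEq ι]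
    [AddCommMonoid M] (m : ℕ) (F : Finset ι → M) :
    ∑ v : Fin m → ι with Function.Injective v, F (univ.image v)
      = m.factorial • ∑ A ∈ powersetCard m univ, F A := by
  have hmaps : ∀ v ∈ ({v : Fin m → ι | Function.Injective v} : Finset _),
      univ.image v ∈ powersetCard m (univ : Finset ι) := fun v hv => by
    rw [mem_filter] at hv
    simp [mem_powersetCard, card_image_of_injective _ hv.2]
  rw [← sum_fiberwise_of_maps_to hmaps, smul_sum]
  refine sum_congr rfl fun A hA => ?_
  rw [sum_congr rfl fun v hv => by rw [(mem_filter.mp hv).2], sum_const, filter_filter,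
    card_filter_injective_image_eq (mem_powersetCard.mp hA).2]

theorem Finset.sum_powersetCard_succ_sum_mem {ι M : Type*} [Fintype ι] [DecidableEq ι]
    [AddCommMonoid M] (m : ℕ) (G : Finset ι → ι → M) :
    ∑ A ∈ powersetCard (m + 1) univ, ∑ i ∈ A, G A i
      = ∑ B ∈ powersetCard m univ, ∑ i ∈ Bᶜ, G (insert i B) i := by
  rw [sum_sigma', sum_sigma']
  refine sum_nbij' (fun p => ⟨p.1.erase p.2, p.2⟩) (fun p => ⟨insert p.2 p.1, p.2⟩)
    (fun p hp => ?_) (fun p hp => ?_) (fun p hp => ?_) (fun p hp => ?_) (fun p hp => ?_)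
  all_goals simp only [mem_sigma, mem_powersetCard, subset_univ, true_and, mem_compl] at hp ⊢
  · exact ⟨by rw [card_erase_of_mem hp.2, hp.1]; rfl, notMem_erase _ _⟩
  · exact ⟨by rw [card_insert_of_notMem hp.2, hp.1], mem_insert_self _ _⟩
  · rw [insert_erase hp.2]
  · rw [erase_insert hp.2]
  · rw [insert_erase hp.2]

theorem pow_mul_eq_pow_mul_of_mul_eq {A : Type*} [Monoid A] {y z e : A} (h : y * e = z * e)
    (hz : Commute z e) (n : ℕ) : y ^ n * e = z ^ n * e := by
  induction n with
  | zero => simp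
  | succ n ih =>
    rw [pow_succ, mul_assoc, h, hz.eq, ← mul_assoc, ih, mul_assoc, ← hz.eq, ← mul_assoc,
      ← pow_succ]

theorem Polynomial.aeval_mul_eq_aeval_mul_of_mul_eq {R A : Type*} [CommSemiring R] [Semiring A]
    [Algebra R A] {y z e : A} (h : y * e = z * e) (hz : Commute z e) (F : R[X]) :
    aeval y F * e = aeval z F * e := by
  simp only [aeval_eq_sum_range, sum_mul, smul_mul_assoc, pow_mul_eq_pow_mul_of_mul_eq h hz]

theorem Polynomial.aeval_add_eq_zero_of_mul_self_eq_one {K A : Type*} [Field K] [NeZero (2 : K)]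
    [Ring A] [Algebra K A] {s a : A} (ha : a * a = 1) (hsa : Commute s a) {F : K[X]}
    (hplus : aeval (s + 1) F = 0) (hminus : aeval (s - 1) F = 0) : aeval (s + a) F = 0 := by
  -- `(s + a) (1 ± a) = (s ± 1) (1 ± a)`, and `(1 + a) + (1 - a) = 2`.
  have hp : aeval (s + a) F * (1 + a) = 0 := by
    rw [aeval_mul_eq_aeval_mul_of_mul_eq (z := s + 1) _ _, hplus, zero_mul]
    · simp only [mul_add, add_mul, mul_one, one_mul, ha, hsa.eq]; abel
    · exact ((Commute.one_right s).add_right hsa).add_left (Commute.one_left _)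
  have hm : aeval (s + a) F * (1 - a) = 0 := by
    rw [aeval_mul_eq_aeval_mul_of_mul_eq (z := s - 1) _ _, hminus, zero_mul]
    · simp only [mul_sub, add_mul, sub_mul, mul_one, one_mul, ha, hsa.eq]; abel
    · exact ((Commute.one_right s).sub_right hsa).sub_left (Commute.one_left _)
  have h2 : aeval (s + a) F * (1 + a) + aeval (s + a) F * (1 - a)
      = (2 : K) • aeval (s + a) F := by
    rw [← mul_add, add_add_sub_cancel, mul_add, mul_one, two_smul]
  rw [hp, hm, add_zero, eq_comm, smul_eq_zero] at h2
  exact h2.resolve_left two_ne_zero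

section InvolSumPoly

variable (K : Type*) [CommRing K]

def involSumPoly (n : ℕ) : K[X] :=
  ∏ p ∈ range (n + 1), (X - C ((n : K) - 2 * p))

variable {K}

theorem involSumPoly_succ_comp_X_add_one (n : ℕ) :
    (involSumPoly K (n + 1)).comp (X + 1) = involSumPoly K n * (X + C ((n : K) + 2)) := by
  rw [involSumPoly, involSumPoly, Polynomial.prod_comp, prod_range_succ]
  simp only [sub_comp, X_comp, C_comp]
  simp only [map_sub, map_mul, map_natCast, Nat.cast_succ, map_add, map_one, map_ofNat]
  congr 1
  · exact prod_congr rfl fun p _ => by ring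
  · ring

theorem involSumPoly_succ_comp_X_sub_one (n : ℕ) :
    (involSumPoly K (n + 1)).comp (X - 1) = involSumPoly K n * (X - C ((n : K) + 2)) := by
  rw [involSumPoly, involSumPoly, Polynomial.prod_comp, prod_range_succ']
  simp only [sub_comp, X_comp, C_comp]
  simp only [map_sub, map_mul, map_natCast, Nat.cast_succ, map_add, map_one, map_ofNat,
    Nat.cast_zero, mul_zero, sub_zero]
  congr 1
  · exact prod_congr rfl fun p _ => by ring
  · ring

theorem involSumPoly_add_two (n : ℕ) :
    involSumPoly K (n + 2) = (X ^ 2 - C (((n : K) + 2) ^ 2)) * involSumPoly K n := by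
  rw [involSumPoly, involSumPoly, prod_range_succ, prod_range_succ']
  simp only [map_sub, map_mul, map_natCast, Nat.cast_succ, map_add, map_one, map_ofNat, map_pow,
    Nat.cast_zero, mul_zero, sub_zero]
  have hshift (p : ℕ) :
      X - ((n : K[X]) + 1 + 1 - 2 * ((p : K[X]) + 1)) = X - ((n : K[X]) - 2 * (p : K[X])) := by
    ring
  simp only [hshift]
  ring

theorem X_mul_prod_range_eq_involSumPoly (r : ℕ) :
    X * ∏ j ∈ range r, (X ^ 2 - C ((2 * (r : K) - 2 * j) ^ 2)) = involSumPoly K (2 * r) := by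
  induction r with
  | zero => simp [involSumPoly]
  | succ r ih =>
    rw [prod_range_succ', show 2 * (r + 1) = 2 * r + 2 by ring, involSumPoly_add_two, ← ih]
    push_cast
    simp only [show ∀ j : ℕ, 2 * ((r : K) + 1) - 2 * ((j : K) + 1) = 2 * r - 2 * j from
      fun j => by ring]
    ring_nf

end InvolSumPoly

section CommutingFamily

variable {ι A : Type*} [Ring A] {x : ι → A} (hc : ∀ i j, Commute (x i) (x j))

def commProd (s : Finset ι) : A := s.noncommProd x fun i _ j _ _ => hc i j

theorem commProd_insert [DecidableEq ι] {i : ι} {s : Finset ι} (h : i ∉ s) :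
    commProd hc (insert i s) = x i * commProd hc s :=
  noncommProd_insert_of_notMem _ _ _ _ h

theorem mul_commProd_of_mem [DecidableEq ι] {i : ι} (hi : x i * x i = 1) {s : Finset ι}
    (h : i ∈ s) : x i * commProd hc s = commProd hc (s.erase i) := by
  conv_lhs => rw [← insert_erase h, commProd_insert hc (notMem_erase i s), ← mul_assoc, hi,
    one_mul]

theorem aeval_sum_involSumPoly {K : Type*} [Field K] [NeZero (2 : K)] [Algebra K A] [DecidableEq ι]
    (hc : ∀ i j, Commute (x i) (x j)) (hx : ∀ i, x i * x i = 1) (s : Finset ι) :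
    aeval (∑ i ∈ s, x i) (involSumPoly K #s) = 0 := by
  induction s using Finset.induction_on with
  | empty => simp [involSumPoly]
  | insert a s ha ih =>
    have hT : Commute (∑ i ∈ s, x i) (x a) := Commute.sum_left _ _ _ fun i _ => hc i a
    rw [sum_insert ha, add_comm, card_insert_of_notMem ha]
    refine aeval_add_eq_zero_of_mul_self_eq_one (hx a) hT ?_ ?_
    · have : aeval (∑ i ∈ s, x i + 1) (involSumPoly K (#s + 1))
          = aeval (∑ i ∈ s, x i) ((involSumPoly K (#s + 1)).comp (X + 1)) := by
        simp [aeval_comp]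
      rw [this, involSumPoly_succ_comp_X_add_one, map_mul, ih, zero_mul]
    · have : aeval (∑ i ∈ s, x i - 1) (involSumPoly K (#s + 1))
          = aeval (∑ i ∈ s, x i) ((involSumPoly K (#s + 1)).comp (X - 1)) := by
        simp [aeval_comp]
      rw [this, involSumPoly_succ_comp_X_sub_one, map_mul, ih, zero_mul]

variable [Fintype ι]

def commEsymm (m : ℕ) : A := ∑ s ∈ powersetCard m univ, commProd hc s

theorem commute_commEsymm {y : A} (h : ∀ i, Commute y (x i)) (m : ℕ) :
    Commute y (commEsymm hc m) :=
  Commute.sum_right _ _ _ fun _ _ => noncommProd_commute _ _ _ _ fun i _ => h i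

theorem commEsymm_zero : commEsymm hc 0 = 1 := by
  rw [commEsymm, powersetCard_zero, sum_singleton]
  exact noncommProd_empty _ _

theorem commEsymm_one : commEsymm hc 1 = ∑ i, x i := by
  simp [commEsymm, commProd, powersetCard_one]

theorem sum_mul_commEsymm_succ [DecidableEq ι] (hx : ∀ i, x i * x i = 1) (m : ℕ) :
    (∑ i, x i) * commEsymm hc (m + 1)
      = (m + 2) • commEsymm hc (m + 2) + (Fintype.card ι - m) • commEsymm hc m := by
  have hsplit (s : Finset ι) : ∑ i, x i * commProd hc s
      = ∑ i ∈ s, commProd hc (s.erase i) + ∑ i ∈ sᶜ, commProd hc (insert i s) := by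
    rw [← sum_add_sum_compl s]
    congr 1
    · exact sum_congr rfl fun i hi => mul_commProd_of_mem hc (hx i) hi
    · exact sum_congr rfl fun i hi => (commProd_insert hc (mem_compl.mp hi)).symm
  have hdown : ∑ s ∈ powersetCard (m + 1) univ, ∑ i ∈ s, commProd hc (s.erase i)
      = (Fintype.card ι - m) • commEsymm hc m := by
    rw [sum_powersetCard_succ_sum_mem m fun s i => commProd hc (s.erase i), commEsymm, smul_sum]
    refine sum_congr rfl fun s hs => ?_
    rw [sum_congr rfl fun i hi => by rw [erase_insert (mem_compl.mp hi)], sum_const, card_compl,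
      (mem_powersetCard.mp hs).2]
  have hup : ∑ s ∈ powersetCard (m + 1) univ, ∑ i ∈ sᶜ, commProd hc (insert i s)
      = (m + 2) • commEsymm hc (m + 2) := by
    rw [← sum_powersetCard_succ_sum_mem (m + 1) fun s _ => commProd hc s, commEsymm, smul_sum]
    exact sum_congr rfl fun s hs => by rw [sum_const, (mem_powersetCard.mp hs).2]
  simp only [commEsymm, mul_sum, sum_mul] at hdown hup ⊢
  rw [sum_congr rfl fun s _ => hsplit s, sum_add_distrib, hdown, hup, add_comm]

theorem commEsymm_two_mul_mul_eq {K : Type*} [Field K] [CharZero K] [Algebra K A]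
    [DecidableEq ι] (hx : ∀ i, x i * x i = 1) {r : ℕ}
    (hcard : Fintype.card ι = 2 * r) {P : A} (hP : (∑ i, x i) * P = 0) (k : ℕ) :
    commEsymm hc (2 * k) * P = ((-1) ^ k * r.choose k : K) • P := by
  induction k with
  | zero => simp [commEsymm_zero]
  | succ k ih =>
    have hchoose : (2 * k + 2) * r.choose (k + 1) = (2 * r - 2 * k) * r.choose k := by
      rw [show 2 * r - 2 * k = 2 * (r - k) by omega, mul_assoc, mul_comm (r - k),
        ← Nat.choose_succ_right_eq]
      ring
    have hSe : Commute (∑ i, x i) (commEsymm hc (2 * k + 1)) :=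
      commute_commEsymm hc (fun i => Commute.sum_left _ _ _ fun j _ => hc j i) _
    have hzero : (∑ i, x i) * commEsymm hc (2 * k + 1) * P = 0 := by
      rw [hSe.eq, mul_assoc, hP, mul_zero]
    rw [sum_mul_commEsymm_succ hc hx, add_mul, smul_mul_assoc, smul_mul_assoc, ih, hcard]
      at hzero
    have hne : ((2 * k + 2 : ℕ) : K) ≠ 0 := Nat.cast_ne_zero.mpr (by omega)
    rw [show 2 * (k + 1) = 2 * k + 2 by ring]
    apply smul_right_injective A hne
    dsimp only
    rw [Nat.cast_smul_eq_nsmul, eq_neg_of_add_eq_zero_left hzero, ← Nat.cast_smul_eq_nsmul K,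
      smul_smul, smul_smul, ← neg_smul]
    congr 1
    have hchooseK := congrArg (Nat.cast : ℕ → K) hchoose
    push_cast at hchooseK ⊢
    linear_combination (-1) ^ k * hchooseK

end CommutingFamily

theorem descPochhammer_smeval_eq_prod_range {R : Type*} [CommRing R] (k : ℕ) (z : R) :
    (descPochhammer ℤ k).smeval z = ∏ j ∈ range k, (z - j) := by
  rw [← aeval_eq_smeval, aeval_def, eval₂_eq_eval_map, descPochhammer_map,
    descPochhammer_eval_eq_prod_range]

theorem sum_range_choose_mul_prod_add_mul_prod_add {R : Type*} [CommRing R] (x y : R) (n : ℕ) :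
    ∑ k ∈ range (n + 1), n.choose k * (∏ j ∈ range k, (x + j)) * ∏ j ∈ range (n - k), (y + j)
      = ∏ j ∈ range n, (x + y + j) := by
  have hneg (k : ℕ) (z : R) : ∏ j ∈ range k, (z + j) = (-1) ^ k * ∏ j ∈ range k, (-z - j) := by
    rw [show (-1 : R) ^ k = (-1) ^ #(range k) by rw [card_range], ← prod_neg]
    exact prod_congr rfl fun j _ => by ring
  have h := Ring.descPochhammer_smeval_add n (Commute.all (-x) (-y))
  rw [Nat.sum_antidiagonal_eq_sum_range_succ_mk] at h
  simp only [descPochhammer_smeval_eq_prod_range] at h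
  rw [hneg, neg_add, h, mul_sum]
  refine sum_congr rfl fun k hk => ?_
  have hpow : ((-1 : R) ^ k * (-1) ^ (n - k)) = (-1) ^ n := by
    rw [← pow_add, Nat.add_sub_cancel' (Nat.lt_succ_iff.mp (mem_range.mp hk))]
  rw [hneg k, hneg (n - k)]
  linear_combination
    (n.choose k * (∏ j ∈ range k, (-x - j)) * ∏ j ∈ range (n - k), (-y - j)) * hpow

theorem Qf_single (r : ℕ) (i : Fin (2 * r)) : Qf r (Pi.single i 1) = 1 := by
  simp [Qf, QuadraticMap.weightedSumSquares_apply, Pi.single_apply]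

theorem polar_Qf_single_of_ne (r : ℕ) {i j : Fin (2 * r)} (h : i ≠ j) :
    QuadraticMap.polar (Qf r) (Pi.single i 1) (Pi.single j 1) = 0 := by
  simp [QuadraticMap.polar, Qf, QuadraticMap.weightedSumSquares_apply, Pi.single_apply, mul_add,
    sum_add_distrib, h, Ne.symm h]

theorem Γgen_mul_self (r : ℕ) (i : Fin (2 * r)) : Γgen r i * Γgen r i = 1 := by
  rw [Γgen, CliffordAlgebra.ι_sq_scalar, Qf_single, map_one]

theorem Γgen_mul_Γgen_of_ne (r : ℕ) {i j : Fin (2 * r)} (h : i ≠ j) :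
    Γgen r i * Γgen r j = -(Γgen r j * Γgen r i) := by
  have := CliffordAlgebra.ι_mul_ι_add_swap (Q := Qf r) (Pi.single i 1) (Pi.single j 1)
  rw [polar_Qf_single_of_ne r h, map_zero] at this
  exact eq_neg_of_add_eq_zero_left this

theorem Γgen_mul_Γgen_eq_units_smul (r : ℕ) (i j : Fin (2 * r)) :
    ∃ ε : ℤˣ, Γgen r i * Γgen r j = ε • (Γgen r j * Γgen r i) := by
  rcases eq_or_ne i j with rfl | h
  · exact ⟨1, by rw [one_smul]⟩
  · exact ⟨-1, by rw [Units.neg_smul, one_smul, Γgen_mul_Γgen_of_ne r h]⟩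

def ξ (r : ℕ) (i : Fin (2 * r)) : Cl r ⊗[ℂ] Cl r := Γgen r i ⊗ₜ Γgen r i

theorem ξ_mul_self (r : ℕ) (i : Fin (2 * r)) : ξ r i * ξ r i = 1 := by
  rw [ξ, Algebra.TensorProduct.tmul_mul_tmul, Γgen_mul_self, Algebra.TensorProduct.one_def]

theorem ξ_commute (r : ℕ) (i j : Fin (2 * r)) : Commute (ξ r i) (ξ r j) :=
  Algebra.TensorProduct.commute_tmul_self (Γgen_mul_Γgen_eq_units_smul r i j)

theorem Γbr_eq_prod_of_injective (r : ℕ) {k : ℕ} {v : Fin k → Fin (2 * r)}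
    (hv : Function.Injective v) : Γbr r k v = (List.ofFn (Γgen r ∘ v)).prod := by
  have hanti : Pairwise fun a b => (Γgen r ∘ v) a * (Γgen r ∘ v) b
      = -((Γgen r ∘ v) b * (Γgen r ∘ v) a) := fun a b hab => Γgen_mul_Γgen_of_ne r (hv.ne hab)
  have hterm (σ : Equiv.Perm (Fin k)) : ((Equiv.Perm.sign σ : ℤ) : ℂ)
      • (List.ofFn fun j => Γgen r (v (σ j))).prod = (List.ofFn (Γgen r ∘ v)).prod := by
    change ((Equiv.Perm.sign σ : ℤ) : ℂ) • (List.ofFn ((Γgen r ∘ v) ∘ σ)).prod = _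
    rw [List.prod_ofFn_comp_perm_of_anticommute σ _ hanti, Int.cast_smul_eq_zsmul, smul_smul,
      ← Units.val_mul, Int.units_mul_self, Units.val_one, one_smul]
  rw [Γbr, sum_congr rfl fun σ _ => hterm σ, sum_const, card_univ, Fintype.card_perm,
    Fintype.card_fin, ← Nat.cast_smul_eq_nsmul ℂ, smul_smul,
    inv_mul_cancel₀ (Nat.cast_ne_zero.mpr k.factorial_ne_zero), one_smul]

theorem Γbr_eq_zero_of_not_injective (r : ℕ) {k : ℕ} {v : Fin k → Fin (2 * r)}
    (hv : ¬ Function.Injective v) : Γbr r k v = 0 := by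
  have h := Equiv.Perm.sum_sign_smul_comp_eq_zero (fun w => (List.ofFn (Γgen r ∘ w)).prod) hv
  simp only [Units.smul_def, ← Int.cast_smul_eq_zsmul ℂ] at h
  rw [Γbr, ← smul_zero ((k.factorial : ℂ)⁻¹), ← h]
  rfl

theorem Γbr_tmul_self_of_injective (r : ℕ) {k : ℕ} {v : Fin k → Fin (2 * r)}
    (hv : Function.Injective v) :
    Γbr r k v ⊗ₜ[ℂ] Γbr r k v = commProd (ξ_commute r) (univ.image v) := by
  have himage : univ.image v = (List.ofFn v).toFinset := by ext; simp [List.mem_ofFn]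
  calc Γbr r k v ⊗ₜ[ℂ] Γbr r k v = ((List.ofFn v).map (ξ r)).prod := by
        rw [Γbr_eq_prod_of_injective r hv, ← List.map_ofFn,
          Algebra.TensorProduct.list_prod_map_tmul]
        rfl
    _ = commProd (ξ_commute r) (univ.image v) := by
        rw [himage]
        exact (noncommProd_toFinset _ _ _ (List.nodup_ofFn.mpr hv)).symm

theorem Ik_eq_factorial_smul_commEsymm (r m : ℕ) :
    Ik r m = m.factorial • commEsymm (ξ_commute r) m := by
  have hnoninj : ∑ v : Fin m → Fin (2 * r) with ¬ Function.Injective v,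
      Γbr r m v ⊗ₜ[ℂ] Γbr r m v = 0 :=
    sum_eq_zero fun v hv => by
      rw [Γbr_eq_zero_of_not_injective r (mem_filter.mp hv).2, TensorProduct.zero_tmul]
  rw [Ik, ← sum_filter_add_sum_filter_not _ Function.Injective, hnoninj, add_zero,
    sum_congr rfl fun v hv => Γbr_tmul_self_of_injective r (mem_filter.mp hv).2,
    sum_filter_injective_image, commEsymm]

theorem ppCh_add_ppCh_neg (r : ℕ) :
    ppCh r 1 1 + ppCh r (-1) (-1) = (2 : ℂ)⁻¹ • (1 + Γtop r ⊗ₜ[ℂ] Γtop r) := by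
  simp only [ppCh, pCh, TensorProduct.add_tmul, TensorProduct.tmul_add, TensorProduct.tmul_smul,
    ← TensorProduct.smul_tmul', smul_add, smul_smul, Algebra.TensorProduct.one_def]
  match_scalars <;> norm_num

theorem ξ_commute_Γtop_tmul_Γtop (r : ℕ) (i : Fin (2 * r)) :
    Commute (ξ r i) (Γtop r ⊗ₜ[ℂ] Γtop r) := by
  rw [Γtop, ← TensorProduct.smul_tmul', TensorProduct.tmul_smul]
  refine ((Algebra.TensorProduct.commute_tmul_self ?_).smul_right _).smul_right _
  refine exists_units_mul_list_prod _ _ fun b hb => ?_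
  obtain ⟨j, rfl⟩ := List.mem_ofFn.mp hb
  exact Γgen_mul_Γgen_eq_units_smul r i j

theorem commute_commEsymm_ppCh (r m : ℕ) :
    Commute (commEsymm (ξ_commute r) m) (ppCh r 1 1 + ppCh r (-1) (-1)) := by
  rw [ppCh_add_ppCh_neg]
  refine (commute_commEsymm _ (fun i => ?_) m).symm
  exact (((Commute.one_left _).add_left (ξ_commute_Γtop_tmul_Γtop r i).symm).smul_left _)

-- At `r = 1` both sides are `0`, by the convention `0⁻¹ = 0`.
theorem cEv_eq (r j : ℕ) :
    cEv r j = -(16 * (2 * (r : ℂ) - 2))⁻¹ * ((2 * (r : ℂ) - 2 * j) ^ 2 - 2 * r) := by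
  rw [cEv, div_eq_mul_inv, show 16 * (2 * (r : ℂ) - 2) = 32 * (r - 1) by ring, mul_inv,
    mul_inv]
  ring

theorem Ik_two_eq_aeval (r : ℕ) : Ik r 2 = aeval (∑ i, ξ r i) (X ^ 2 - C (2 * (r : ℂ))) := by
  have h := sum_mul_commEsymm_succ (ξ_commute r) (ξ_mul_self r) 0
  rw [commEsymm_one, commEsymm_zero, Fintype.card_fin] at h
  rw [Ik_eq_factorial_smul_commEsymm, map_sub, aeval_X_pow, aeval_C, pow_two, h,
    Algebra.algebraMap_eq_smul_one]
  simp [← Nat.cast_smul_eq_nsmul ℂ]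

theorem sC_sub_cEv_smul_one (r j : ℕ) :
    sC r - cEv r j • 1 = aeval (∑ i, ξ r i)
      (C (-(16 * (2 * (r : ℂ) - 2))⁻¹) * (X ^ 2 - C ((2 * (r : ℂ) - 2 * j) ^ 2))) := by
  rw [sC, Ik_two_eq_aeval, cEv_eq]
  simp only [map_mul, map_sub, aeval_C, aeval_X_pow, Algebra.algebraMap_eq_smul_one,
    smul_mul_assoc, one_mul]
  module

theorem Pk_self_eq_aeval (r : ℕ) :
    Pk r r = aeval (∑ i, ξ r i) (∏ j ∈ range r, C ((cEv r r - cEv r j)⁻¹) *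
      (C (-(16 * (2 * (r : ℂ) - 2))⁻¹) * (X ^ 2 - C ((2 * (r : ℂ) - 2 * j) ^ 2)))) := by
  have hfilter : (List.range (r + 1)).filter (fun j => j ≠ r) = List.range r := by
    simp only [ne_eq, decide_not, List.range_succ, List.filter_append, decide_true, Bool.not_true,
      Bool.false_eq_true, not_false_eq_true, List.filter_cons_of_neg, List.filter_nil,
      List.append_nil, List.filter_eq_self, List.mem_range, Bool.not_eq_eq_eq_not,
      decide_eq_false_iff_not]
    exact fun j hj => hj.ne
  rw [Pk, hfilter, prod_eq_multiset_prod, range_val, Multiset.range, Multiset.map_coe,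
    Multiset.prod_coe, map_list_prod, List.map_map]
  congr 1
  refine List.map_congr_left fun j _ => ?_
  rw [Function.comp_apply, map_mul, aeval_C, ← sC_sub_cEv_smul_one, Algebra.smul_def]

theorem sum_ξ_mul_Pk_self (r : ℕ) : (∑ i, ξ r i) * Pk r r = 0 := by
  have hann := aeval_sum_involSumPoly (K := ℂ) (ξ_commute r) (ξ_mul_self r) univ
  rw [card_univ, Fintype.card_fin, ← X_mul_prod_range_eq_involSumPoly] at hann
  rw [Pk_self_eq_aeval]
  nth_rewrite 1 [← aeval_X (R := ℂ) (∑ i, ξ r i)]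
  rw [← map_mul]
  refine aeval_eq_zero_of_dvd_aeval_eq_zero (mul_dvd_mul_left X ?_) hann
  exact prod_dvd_prod_of_dvd _ _ fun j _ => dvd_mul_of_dvd_right (dvd_mul_left _ _) _

theorem Ik_two_mul_mul_PrS (r k : ℕ) :
    Ik r (2 * k) * PrS r = ((2 * k).factorial * ((-1) ^ k * r.choose k) : ℂ) • PrS r := by
  have hPk := commEsymm_two_mul_mul_eq (K := ℂ) (ξ_commute r) (ξ_mul_self r)
    (Fintype.card_fin _) (sum_ξ_mul_Pk_self r) k
  rw [PrS, Ik_eq_factorial_smul_commEsymm, ← Nat.cast_smul_eq_nsmul ℂ, smul_mul_assoc, ← mul_assoc,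
    (commute_commEsymm_ppCh r (2 * k)).eq, mul_assoc, hPk, mul_smul_comm, smul_smul]

theorem RS_mul_PrS_general (r : ℕ) (u : ℂ) :
    (∑ k ∈ Finset.range (r+1),
        (((-1:ℂ)^k / (((2*k).factorial : ℕ) : ℂ)) * asc u k * asc u (r-k)) • Ik r (2*k))
      * PrS r
      = (∏ k ∈ Finset.range r, (u + (k:ℂ))) • PrS r := by
  have hterm (k : ℕ) :
      (((-1 : ℂ) ^ k / ((2 * k).factorial : ℂ)) * asc u k * asc u (r - k)) • Ik r (2 * k) * PrS r
        = (r.choose k * asc u k * asc u (r - k) : ℂ) • PrS r := by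
    have hsign : ((-1 : ℂ) ^ k) * (-1) ^ k = 1 := by rw [← mul_pow]; norm_num
    have hfact : ((2 * k).factorial : ℂ) ≠ 0 := Nat.cast_ne_zero.mpr (Nat.factorial_ne_zero _)
    rw [smul_mul_assoc, Ik_two_mul_mul_PrS, smul_smul]
    congr 1
    field_simp
    linear_combination (r.choose k * asc u k * asc u (r - k) : ℂ) * hsign
  rw [sum_mul, sum_congr rfl fun k _ => hterm k, ← sum_smul]
  congr 1
  simpa [asc, add_halves] using sum_range_choose_mul_prod_add_mul_prod_add (u / 2) (u / 2) r

/-- `(Σ_{k=0}^{r} ((−1)^k/(2k)!)·a_k(u)·a_{r−k}(u)·I_{2k})·P_r^S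
  = (Π_{k=0}^{r−1}(u+k))·P_r^S`. -/
theorem RS_mul_PrS (r : ℕ) (hr : 2 ≤ r) (u : ℂ) :
    (∑ k ∈ Finset.range (r+1),
        (((-1:ℂ)^k / (((2*k).factorial : ℕ) : ℂ)) * asc u k * asc u (r-k)) • Ik r (2*k))
      * PrS r
      = (∏ k ∈ Finset.range r, (u + (k:ℂ))) • PrS r :=
  RS_mul_PrS_general r u

end
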